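/- arXiv:1105.0585 — 2 statements merged into one kernel-verified Lean document; each statement's English description precedes it below -/
import Mathlib

section
/- Derivative identity for the second q-Hankel transform: fix an integer m ≥ 1 and set μ = 1 + q^{2−m}. Let ν ≥ 1/2, let α, γ > 0, let p be a real polynomial, and define f(t) = p(t²)·e_{q²}(−αq²t²/μ) for t > 0. Then for every real r > 0, 𝓗^{q,γ}_{ν−1}[t ↦ t ∂^q_t f(t)](r) = ((1+q)/μ) r² · 𝓗^{q,γ}_ν[f](r) − ([2ν]_q/q^{2ν}) · 𝓗^{q,γ}_{ν−1}[f](q^{−1}r). -/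
/-!
The kernel `K_ν(r, t) = J^{(2)}_ν(q((1+q)/μ) r t | q²) / (rt)^ν · t^{2ν+1}` of the transform
obeys two identities. Dilation: `K_ν(r/q, qt) = q^{2ν+1} K_ν(r, t)`. Contiguity in the order:
`K_{ν-1}(r, t) - K_{ν-1}(r/q, t) = ((1-q²)/μ) r² K_ν(r, t)`, which is the recurrence of the
Bessel coefficients summed term by term. Since the Jackson integral over `γ q^ℤ` is invariant
under `t ↦ qt` up to the factor `q⁻¹`, the term `f(qt)` in `t ∂_q f(t)` can be moved onto the
kernel by dilation; integrating the contiguous relation against `f` then gives the identity,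
with `(1-q) [2ν]_q = 1 - q^{2ν}`.

All bilateral series converge absolutely. The Bessel coefficients are `O(q^{2i²} ρ^i)`, so the
kernel grows at most like the partial theta function `∑ q^{2i²} (ρ t²)^i`, while
`1/E_{q²}(c t²)` is at most the reciprocal of the `n`-th term of its series. At `t = γ q^{-n}`
these combine into a Gaussian factor `q^{n²/4}`, which beats every exponential factor in `n`.
-/

open scoped BigOperators

noncomputable section

/-- The q-number `[u]_q = (q^u - 1)/(q - 1)`. -/
def qNum (q u : ℝ) : ℝ := (q ^ u - 1) / (q - 1)

/-- The q-factorial `[n]_q! = ∏_{i=1}^n [i]_q`. -/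
def qFact (q : ℝ) (n : ℕ) : ℝ := ∏ i ∈ Finset.range n, qNum q ((i : ℝ) + 1)

/-- The q-Gamma function `Γ_q(t) = (1-q)^{1-t} ∏_{k=0}^∞ (1-q^{k+1})/(1-q^{k+t})`. -/
def qGamma (q t : ℝ) : ℝ :=
  (1 - q) ^ (1 - t) * ∏' k : ℕ, (1 - q ^ (k + 1)) / (1 - q ^ ((k : ℝ) + t))

/-- The q-derivative `∂^q_t f(t) = (f(qt) - f(t))/((q-1)t)`.
The `q⁻¹`-derivative is `qDeriv q⁻¹`. -/
def qDeriv (q : ℝ) (f : ℝ → ℝ) (t : ℝ) : ℝ := (f (q * t) - f t) / ((q - 1) * t)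

/-- The q-Pochhammer symbol `(a; q)_k = ∏_{l=0}^{k-1} (1 - a q^l)`. -/
def qPoch (a q : ℝ) (k : ℕ) : ℝ := ∏ l ∈ Finset.range k, (1 - a * q ^ l)

/-- The q-exponential `E_q(t) = ∑_{j=0}^∞ q^{j(j-1)/2} t^j/[j]_q!`. -/
def qExpE (q t : ℝ) : ℝ := ∑' j : ℕ, q ^ (j * (j - 1) / 2) * t ^ j / qFact q j

/-- `e_q(-u) := 1/E_q(u)` (intended for `u ≥ 0`); `qExpe q u` denotes `e_q(-u)`. -/
def qExpe (q u : ℝ) : ℝ := (qExpE q u)⁻¹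

/-- The first q-Bessel function `J^{(1)}_ν(x|q²)`. -/
def qBessel1 (q ν x : ℝ) : ℝ :=
  (x / (1 + q)) ^ ν *
    ∑' i : ℕ, (-1 : ℝ) ^ i / (qFact (q ^ 2) i * qGamma (q ^ 2) ((i : ℝ) + ν + 1)) *
      (x / (1 + q)) ^ (2 * i)

/-- The second q-Bessel function `J^{(2)}_ν(x|q²)`. -/
def qBessel2 (q ν x : ℝ) : ℝ :=
  q ^ (ν ^ 2) * (x / (1 + q)) ^ ν *
    ∑' i : ℕ, q ^ (2 * (i : ℝ) * ((i : ℝ) + ν)) * (-1 : ℝ) ^ i /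
        (qFact (q ^ 2) i * qGamma (q ^ 2) ((i : ℝ) + ν + 1)) *
      (x / (1 + q)) ^ (2 * i)

/-- The q-Laguerre polynomial `𝓛^{(α)}_j(u|q²)`. -/
def qLaguerre (q α : ℝ) (j : ℕ) (u : ℝ) : ℝ :=
  ∑ i ∈ Finset.range (j + 1),
    q ^ ((j - i) * (j - i + 1)) * (-u) ^ i / (qFact (q ^ 2) (j - i) * qFact (q ^ 2) i) *
      (qPoch (q ^ (2 * (i : ℝ) + 2 * α + 2)) (q ^ 2) (j - i) / (1 - q ^ 2) ^ (j - i))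

/-- The q-Laguerre polynomial `𝓛^{(α)}_j(u|q^{-2})`. -/
def qLaguerreInv (q α : ℝ) (j : ℕ) (u : ℝ) : ℝ :=
  q ^ (-(j : ℝ) * ((j : ℝ) + 1 + 2 * α)) *
    ∑ i ∈ Finset.range (j + 1),
      q ^ (2 * (i : ℝ) * ((i : ℝ) + α)) * (-u) ^ i / (qFact (q ^ 2) (j - i) * qFact (q ^ 2) i) *
        (qPoch (q ^ (2 * (i : ℝ) + 2 * α + 2)) (q ^ 2) (j - i) / (1 - q ^ 2) ^ (j - i))

/-- The finite Jackson q-integral `∫_0^a f(t) d_q t = (1-q) a ∑_{k=0}^∞ f(q^k a) q^k`. -/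
def jackson (q a : ℝ) (f : ℝ → ℝ) : ℝ := (1 - q) * a * ∑' k : ℕ, f (q ^ k * a) * q ^ k

/-- The infinite Jackson q-integral `∫_0^{γ·∞} f(t) d_q t = (1-q) γ ∑_{k=-∞}^∞ f(q^k γ) q^k`. -/
def jacksonInf (q γ : ℝ) (f : ℝ → ℝ) : ℝ := (1 - q) * γ * ∑' k : ℤ, f (q ^ k * γ) * q ^ k

/-- The first q-Hankel transform `𝓗̄^{q,β}_ν`. -/
def hankel1 (q μ ν β : ℝ) (f : ℝ → ℝ) (t : ℝ) : ℝ :=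
  (1 + q) / μ * jackson q (Real.sqrt (μ / ((1 - q ^ 2) * β)))
    (fun r => qBessel1 q ν ((1 + q) / μ * (r * t)) / (r * t) ^ ν * r ^ (2 * ν + 1) * f r)

/-- The second q-Hankel transform `𝓗^{q,γ}_ν`. -/
def hankel2 (q μ ν γ : ℝ) (f : ℝ → ℝ) (r : ℝ) : ℝ :=
  (1 + q) / μ * jacksonInf q γ
    (fun t => qBessel2 q ν (q * ((1 + q) / μ) * (r * t)) / (r * t) ^ ν * t ^ (2 * ν + 1) * f t)

open Finset

section QNumbers

variable {q : ℝ}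

lemma qNum_pos (hq0 : 0 < q) (hq1 : q < 1) {u : ℝ} (hu : 0 < u) : 0 < qNum q u :=
  div_pos_of_neg_of_neg (by linarith [Real.rpow_lt_one hq0.le hq1 hu]) (by linarith)

lemma one_le_qNum (hq0 : 0 < q) (hq1 : q < 1) {u : ℝ} (hu : 1 ≤ u) : 1 ≤ qNum q u := by
  have h : q ^ u ≤ q := by simpa using Real.rpow_le_rpow_of_exponent_ge hq0 hq1.le hu
  rw [qNum, le_div_iff_of_neg (by linarith)]
  linarith

lemma qNum_le_inv_one_sub (hq0 : 0 < q) (hq1 : q < 1) (u : ℝ) : qNum q u ≤ (1 - q)⁻¹ := by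
  have h : 0 < q ^ u := Real.rpow_pos_of_pos hq0 u
  rw [qNum, ← neg_div_neg_eq, neg_sub, neg_sub, inv_eq_one_div]
  exact div_le_div_of_nonneg_right (by linarith) (by linarith)

lemma qFact_succ (q : ℝ) (n : ℕ) : qFact q (n + 1) = qFact q n * qNum q ((n : ℝ) + 1) :=
  prod_range_succ _ _

lemma one_le_qFact (hq0 : 0 < q) (hq1 : q < 1) (n : ℕ) : 1 ≤ qFact q n :=
  one_le_prod fun i _ => one_le_qNum hq0 hq1 (by simp)

lemma qFact_pos (hq0 : 0 < q) (hq1 : q < 1) (n : ℕ) : 0 < qFact q n :=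
  zero_lt_one.trans_le (one_le_qFact hq0 hq1 n)

lemma qFact_le_inv_one_sub_pow (hq0 : 0 < q) (hq1 : q < 1) (n : ℕ) :
    qFact q n ≤ (1 - q)⁻¹ ^ n := by
  calc qFact q n ≤ ∏ _i ∈ range n, (1 - q)⁻¹ :=
        prod_le_prod (fun i _ => (qNum_pos hq0 hq1 (by positivity)).le)
          (fun i _ => qNum_le_inv_one_sub hq0 hq1 ((i : ℝ) + 1))
    _ = (1 - q)⁻¹ ^ n := by rw [prod_const, card_range]

end QNumbers

section GaussianSeries

variable {Q : ℝ}

lemma summable_pow_mul_self_mul_pow (hQ0 : 0 ≤ Q) (hQ1 : Q < 1) (b : ℝ) :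
    Summable fun n : ℕ => Q ^ (n * n) * b ^ n := by
  have hsmall : ∀ᶠ n : ℕ in Filter.atTop, |Q ^ n * b| ≤ 1 / 2 := by
    have h := (tendsto_pow_atTop_nhds_zero_of_lt_one hQ0 hQ1).mul_const b
    rw [zero_mul] at h
    filter_upwards [(h.abs.eventually (ge_mem_nhds (by norm_num : |(0 : ℝ)| < 1 / 2)))]
      with n hn using hn
  refine (summable_geometric_two).of_norm_bounded_eventually_nat ?_
  filter_upwards [hsmall] with n hn
  rw [pow_mul, ← mul_pow, Real.norm_eq_abs, abs_pow]
  exact pow_le_pow_left₀ (abs_nonneg _) hn n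

def partialTheta (Q x : ℝ) : ℝ := ∑' n : ℕ, Q ^ (n * n) * x ^ n

lemma partialTheta_nonneg (hQ0 : 0 ≤ Q) {x : ℝ} (hx : 0 ≤ x) : 0 ≤ partialTheta Q x :=
  tsum_nonneg fun n => by positivity

lemma partialTheta_mono (hQ0 : 0 ≤ Q) (hQ1 : Q < 1) {x y : ℝ} (hx : 0 ≤ x) (hxy : x ≤ y) :
    partialTheta Q x ≤ partialTheta Q y :=
  Summable.tsum_le_tsum
    (fun n => mul_le_mul_of_nonneg_left (pow_le_pow_left₀ hx hxy n) (by positivity))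
    (summable_pow_mul_self_mul_pow hQ0 hQ1 x) (summable_pow_mul_self_mul_pow hQ0 hQ1 y)

lemma pow_half_pred_mul_eq {P Q : ℝ} (hPQ : P ^ 2 = Q) (n : ℕ) :
    Q ^ (n * (n - 1) / 2) = P ^ (n * (n - 1)) := by
  rw [← hPQ, ← pow_mul, Nat.two_mul_div_two_of_even (Nat.even_mul_pred_self n)]

end GaussianSeries

section QExp

variable {Q : ℝ}

lemma summable_qExpE (hQ0 : 0 < Q) (hQ1 : Q < 1) (w : ℝ) :
    Summable fun j : ℕ => Q ^ (j * (j - 1) / 2) * w ^ j / qFact Q j := by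
  set P := Real.sqrt Q
  have hP0 : 0 < P := Real.sqrt_pos.2 hQ0
  have hP1 : P < 1 := (Real.sqrt_lt' one_pos).2 (by simpa using hQ1)
  refine (summable_pow_mul_self_mul_pow hP0.le hP1 (|w| / P)).of_norm_bounded fun j => ?_
  have hj : j * j = j * (j - 1) + j := by cases j <;> simp [Nat.mul_succ]
  rw [Real.norm_eq_abs, abs_div, abs_of_pos (qFact_pos hQ0 hQ1 j), abs_mul, abs_pow, abs_pow,
    abs_of_pos hQ0, pow_half_pred_mul_eq (Real.sq_sqrt hQ0.le) j, hj, pow_add, div_pow]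
  calc P ^ (j * (j - 1)) * |w| ^ j / qFact Q j ≤ P ^ (j * (j - 1)) * |w| ^ j :=
        div_le_self (by positivity) (one_le_qFact hQ0 hQ1 j)
    _ = P ^ (j * (j - 1)) * P ^ j * (|w| ^ j / P ^ j) := by field_simp

lemma pow_mul_le_qExpE (hQ0 : 0 < Q) (hQ1 : Q < 1) {w : ℝ} (hw : 0 ≤ w) (j : ℕ) :
    Q ^ (j * (j - 1) / 2) * ((1 - Q) * w) ^ j ≤ qExpE Q w := by
  refine le_trans ?_ ((summable_qExpE hQ0 hQ1 w).le_tsum j fun i _ =>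
    div_nonneg (by positivity) (qFact_pos hQ0 hQ1 i).le)
  have h : (1 - Q) ^ j ≤ (qFact Q j)⁻¹ := by
    simpa using inv_anti₀ (qFact_pos hQ0 hQ1 j) (qFact_le_inv_one_sub_pow hQ0 hQ1 j)
  calc Q ^ (j * (j - 1) / 2) * ((1 - Q) * w) ^ j = Q ^ (j * (j - 1) / 2) * w ^ j * (1 - Q) ^ j := by
        rw [mul_pow]; ring
    _ ≤ Q ^ (j * (j - 1) / 2) * w ^ j * (qFact Q j)⁻¹ := by gcongr
    _ = Q ^ (j * (j - 1) / 2) * w ^ j / qFact Q j := (div_eq_mul_inv _ _).symm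

lemma one_le_qExpE (hQ0 : 0 < Q) (hQ1 : Q < 1) {w : ℝ} (hw : 0 ≤ w) : 1 ≤ qExpE Q w := by
  simpa using pow_mul_le_qExpE hQ0 hQ1 hw 0

lemma qExpE_pos (hQ0 : 0 < Q) (hQ1 : Q < 1) {w : ℝ} (hw : 0 ≤ w) : 0 < qExpE Q w :=
  zero_lt_one.trans_le (one_le_qExpE hQ0 hQ1 hw)

end QExp

section QGamma

variable {Q : ℝ}

lemma summable_log_one_sub_mul_pow (hQ0 : 0 ≤ Q) (hQ1 : Q < 1) (c : ℝ) :
    Summable fun k : ℕ => Real.log (1 - c * Q ^ k) := by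
  simpa [sub_eq_add_neg] using
    Real.summable_log_one_add_of_summable ((summable_geometric_of_lt_one hQ0 hQ1).mul_left (-c))

lemma tprod_one_sub_pow_succ_pos (hQ0 : 0 ≤ Q) (hQ1 : Q < 1) :
    0 < ∏' k : ℕ, (1 - Q ^ (k + 1)) := by
  have hpos : ∀ k : ℕ, 0 < 1 - Q ^ (k + 1) :=
    fun k => sub_pos.2 (pow_lt_one₀ hQ0 hQ1 (by simp))
  have hlog : Summable fun k : ℕ => Real.log (1 - Q ^ (k + 1)) := by
    simpa [pow_succ'] using summable_log_one_sub_mul_pow hQ0 hQ1 Q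
  rw [← Real.rexp_tsum_eq_tprod hpos hlog]
  exact Real.exp_pos _

-- Each factor `(1 - Q^{k+1})/(1 - Q^{k+s})` dominates `1 - Q^{k+1}`; compare the sums of logs.
lemma rpow_mul_tprod_le_qGamma (hQ0 : 0 < Q) (hQ1 : Q < 1) {s : ℝ} (hs : 0 < s) :
    (1 - Q) ^ (1 - s) * ∏' k : ℕ, (1 - Q ^ (k + 1)) ≤ qGamma Q s := by
  have hnum : ∀ k : ℕ, 0 < 1 - Q ^ (k + 1) :=
    fun k => sub_pos.2 (pow_lt_one₀ hQ0.le hQ1 (by simp))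
  have hden : ∀ k : ℕ, 0 < 1 - Q ^ ((k : ℝ) + s) :=
    fun k => sub_pos.2 (Real.rpow_lt_one hQ0.le hQ1 (by positivity))
  have hlog_num : Summable fun k : ℕ => Real.log (1 - Q ^ (k + 1)) := by
    simpa [pow_succ'] using summable_log_one_sub_mul_pow hQ0.le hQ1 Q
  have hlog_den : Summable fun k : ℕ => Real.log (1 - Q ^ ((k : ℝ) + s)) := by
    simpa [Real.rpow_add hQ0, mul_comm] using summable_log_one_sub_mul_pow hQ0.le hQ1 (Q ^ s)
  have hlog : Summable fun k : ℕ => Real.log ((1 - Q ^ (k + 1)) / (1 - Q ^ ((k : ℝ) + s))) := by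
    simpa [Real.log_div (hnum _).ne' (hden _).ne'] using hlog_num.sub hlog_den
  rw [qGamma, ← Real.rexp_tsum_eq_tprod hnum hlog_num,
    ← Real.rexp_tsum_eq_tprod (fun k => div_pos (hnum k) (hden k)) hlog]
  refine mul_le_mul_of_nonneg_left (Real.exp_le_exp.2 ?_) (by positivity)
  refine hlog_num.tsum_le_tsum (fun k => ?_) hlog
  rw [Real.log_div (hnum k).ne' (hden k).ne', le_sub_self_iff]
  exact Real.log_nonpos (hden k).le (by linarith [Real.rpow_pos_of_pos hQ0 ((k : ℝ) + s)])

end QGamma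

section PowerSeriesBounds

variable {Q C ρ : ℝ} {a : ℕ → ℝ}

lemma abs_mul_pow_le (ha : ∀ i, |a i| ≤ C * Q ^ (i * i) * ρ ^ i) (x : ℝ) (i : ℕ) :
    |a i * x ^ i| ≤ C * (Q ^ (i * i) * (ρ * |x|) ^ i) := by
  rw [abs_mul, abs_pow, mul_pow, ← mul_assoc, ← mul_assoc]
  exact mul_le_mul_of_nonneg_right (ha i) (by positivity)

lemma summable_mul_pow_of_abs_le (hQ0 : 0 ≤ Q) (hQ1 : Q < 1)
    (ha : ∀ i, |a i| ≤ C * Q ^ (i * i) * ρ ^ i) (x : ℝ) :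
    Summable fun i => a i * x ^ i :=
  ((summable_pow_mul_self_mul_pow hQ0 hQ1 _).mul_left C).of_norm_bounded (abs_mul_pow_le ha x)

lemma abs_tsum_mul_pow_le (hQ0 : 0 ≤ Q) (hQ1 : Q < 1)
    (ha : ∀ i, |a i| ≤ C * Q ^ (i * i) * ρ ^ i) (x : ℝ) :
    |∑' i, a i * x ^ i| ≤ C * partialTheta Q (ρ * |x|) := by
  have hs := (summable_mul_pow_of_abs_le hQ0 hQ1 ha x).norm
  rw [partialTheta, ← tsum_mul_left, ← Real.norm_eq_abs]
  exact (norm_tsum_le_tsum_norm hs).trans (hs.tsum_le_tsum (abs_mul_pow_le ha x)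
    ((summable_pow_mul_self_mul_pow hQ0 hQ1 _).mul_left C))

end PowerSeriesBounds

def qBessel2Coeff (q ν : ℝ) (i : ℕ) : ℝ :=
  q ^ (2 * (i : ℝ) * ((i : ℝ) + ν)) * (-1 : ℝ) ^ i /
    (qFact (q ^ 2) i * qGamma (q ^ 2) ((i : ℝ) + ν + 1))

def qBessel2Series (q ν z : ℝ) : ℝ := ∑' i : ℕ, qBessel2Coeff q ν i * z ^ (2 * i)

lemma qBessel2_eq (q ν x : ℝ) :
    qBessel2 q ν x = q ^ (ν ^ 2) * (x / (1 + q)) ^ ν * qBessel2Series q ν (x / (1 + q)) := rfl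

section QBessel

variable {q : ℝ}

lemma exists_abs_qBessel2Coeff_le (hq0 : 0 < q) (hq1 : q < 1) {ν : ℝ} (hν : -1 < ν) :
    ∃ C ρ : ℝ, 0 ≤ ρ ∧
      ∀ i, |qBessel2Coeff q ν i| ≤ C * (q ^ 2) ^ (i * i) * ρ ^ i := by
  have hQ0 : 0 < q ^ 2 := by positivity
  have hQ1 : q ^ 2 < 1 := by nlinarith
  have hQ : 0 < 1 - q ^ 2 := by linarith
  set P := ∏' k : ℕ, (1 - (q ^ 2) ^ (k + 1))
  have hP : 0 < P := tprod_one_sub_pow_succ_pos hQ0.le hQ1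
  refine ⟨(1 - q ^ 2) ^ ν / P, (1 - q ^ 2) * q ^ (2 * ν), by positivity, fun i => ?_⟩
  have hs : 0 < (i : ℝ) + ν + 1 := by linarith [(Nat.cast_nonneg i : (0 : ℝ) ≤ i)]
  have hΓ := rpow_mul_tprod_le_qGamma hQ0 hQ1 hs
  have hΓpos : 0 < qGamma (q ^ 2) ((i : ℝ) + ν + 1) := lt_of_lt_of_le (by positivity) hΓ
  have hF := one_le_qFact hQ0 hQ1 i
  have hpow : q ^ (2 * (i : ℝ) * ((i : ℝ) + ν)) = (q ^ 2) ^ (i * i) * (q ^ (2 * ν)) ^ i := by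
    rw [← pow_mul, ← Real.rpow_natCast, ← Real.rpow_mul_natCast hq0.le, ← Real.rpow_add hq0]
    push_cast
    ring_nf
  have hΓinv :
      (qGamma (q ^ 2) ((i : ℝ) + ν + 1))⁻¹ ≤ (1 - q ^ 2) ^ ν * (1 - q ^ 2) ^ i / P := by
    have hexp :
        (1 - q ^ 2) ^ (1 - ((i : ℝ) + ν + 1)) = ((1 - q ^ 2) ^ ν * (1 - q ^ 2) ^ i)⁻¹ := by
      rw [← Real.rpow_natCast (1 - q ^ 2) i, ← Real.rpow_add hQ, ← Real.rpow_neg hQ.le]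
      ring_nf
    rw [hexp] at hΓ
    calc (qGamma (q ^ 2) ((i : ℝ) + ν + 1))⁻¹
          ≤ (((1 - q ^ 2) ^ ν * (1 - q ^ 2) ^ i)⁻¹ * P)⁻¹ :=
            inv_anti₀ (by positivity) hΓ
      _ = _ := by rw [mul_inv, inv_inv, div_eq_mul_inv]
  rw [qBessel2Coeff, abs_div, abs_mul, abs_pow, abs_neg, abs_one, one_pow, mul_one,
    abs_of_pos (Real.rpow_pos_of_pos hq0 _), abs_of_pos (by positivity), hpow, div_eq_mul_inv,
    mul_inv]
  calc (q ^ 2) ^ (i * i) * (q ^ (2 * ν)) ^ i * ((qFact (q ^ 2) i)⁻¹ * (qGamma (q ^ 2) _)⁻¹)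
      ≤ (q ^ 2) ^ (i * i) * (q ^ (2 * ν)) ^ i *
          (1 * ((1 - q ^ 2) ^ ν * (1 - q ^ 2) ^ i / P)) := by
        gcongr
        exact inv_le_one_of_one_le₀ hF
    _ = _ := by rw [mul_pow]; ring

lemma qBessel2Coeff_succ_mul (hq0 : 0 < q) (hq1 : q < 1) (ν : ℝ) (j : ℕ) :
    qBessel2Coeff q (ν - 1) (j + 1) * (1 - (q ^ (2 * (j + 1)))⁻¹) =
      (1 - q ^ 2) * q ^ (2 * ν - 2) * qBessel2Coeff q ν j := by
  have hQ0 : 0 < q ^ 2 := by positivity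
  have hQ1 : q ^ 2 < 1 := by nlinarith
  have harg : ((j + 1 : ℕ) : ℝ) + (ν - 1) + 1 = (j : ℝ) + ν + 1 := by push_cast; ring
  rw [qBessel2Coeff, qBessel2Coeff, harg, qFact_succ]
  by_cases hΓ : qGamma (q ^ 2) ((j : ℝ) + ν + 1) = 0
  · simp [hΓ]
  have hF := (qFact_pos hQ0 hQ1 j).ne'
  have hnum : qNum (q ^ 2) ((j : ℝ) + 1) = (q ^ (2 * (j + 1)) - 1) / (q ^ 2 - 1) := by
    rw [qNum, ← Real.rpow_natCast q 2, ← Real.rpow_mul hq0.le,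
      ← Real.rpow_natCast q (2 * (j + 1))]
    push_cast
    ring_nf
  have hexp : q ^ (2 * ((j + 1 : ℕ) : ℝ) * (((j + 1 : ℕ) : ℝ) + (ν - 1))) =
      q ^ (2 * ν - 2) * q ^ (2 * (j : ℝ) * ((j : ℝ) + ν)) * q ^ (2 * (j + 1)) := by
    rw [← Real.rpow_natCast q (2 * (j + 1)), ← Real.rpow_add hq0, ← Real.rpow_add hq0]
    push_cast
    ring_nf
  have hPlt : q ^ (2 * (j + 1)) < 1 := pow_lt_one₀ hq0.le hq1 (by omega)
  have hPpos : 0 < q ^ (2 * (j + 1)) := by positivity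
  rw [hexp, hnum, pow_succ (-1 : ℝ) j]
  field_simp [(by linarith : q ^ (2 * (j + 1)) - 1 ≠ 0), (by linarith : q ^ 2 - 1 ≠ 0)]
  ring

lemma qBessel2Series_sub_div (hq0 : 0 < q) (hq1 : q < 1) {ν : ℝ} (hν : 0 < ν) (z : ℝ) :
    qBessel2Series q (ν - 1) z - qBessel2Series q (ν - 1) (z / q) =
      (1 - q ^ 2) * q ^ (2 * ν - 2) * z ^ 2 * qBessel2Series q ν z := by
  have hQ0 : 0 ≤ q ^ 2 := by positivity
  have hQ1 : q ^ 2 < 1 := by nlinarith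
  have hsum : ∀ {ν' : ℝ}, -1 < ν' → ∀ x : ℝ,
      Summable fun i => qBessel2Coeff q ν' i * x ^ (2 * i) := fun hν' x => by
    obtain ⟨C, ρ, -, hc⟩ := exists_abs_qBessel2Coeff_le hq0 hq1 hν'
    simpa [pow_mul] using summable_mul_pow_of_abs_le hQ0 hQ1 hc (x ^ 2)
  set g : ℕ → ℝ := fun i =>
    qBessel2Coeff q (ν - 1) i * z ^ (2 * i) - qBessel2Coeff q (ν - 1) i * (z / q) ^ (2 * i)
  have hg : Summable g := (hsum (by linarith) z).sub (hsum (by linarith) (z / q))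
  have hg_succ : ∀ j : ℕ, g (j + 1) =
      (1 - q ^ 2) * q ^ (2 * ν - 2) * z ^ 2 * (qBessel2Coeff q ν j * z ^ (2 * j)) := by
    intro j
    simp only [g, div_pow]
    linear_combination z ^ (2 * (j + 1)) * qBessel2Coeff_succ_mul hq0 hq1 ν j
  rw [qBessel2Series, qBessel2Series, qBessel2Series, ← (hsum (by linarith) z).tsum_sub
    (hsum (by linarith) (z / q)), hg.tsum_eq_zero_add, ← tsum_mul_left]
  simp [g, hg_succ]

end QBessel

def hankelKernel (q μ ν r t : ℝ) : ℝ :=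
  qBessel2 q ν (q * ((1 + q) / μ) * (r * t)) / (r * t) ^ ν * t ^ (2 * ν + 1)

lemma hankel2_eq_jacksonInf (q μ ν γ : ℝ) (f : ℝ → ℝ) (r : ℝ) :
    hankel2 q μ ν γ f r =
      (1 + q) / μ * jacksonInf q γ fun t => hankelKernel q μ ν r t * f t :=
  rfl

section HankelKernel

variable {q μ r t : ℝ}

lemma hankelKernel_eq (hq0 : 0 < q) (hμ : 0 < μ) (hr : 0 < r) (ht : 0 < t) (ν : ℝ) :
    hankelKernel q μ ν r t =
      q ^ (ν ^ 2) * (q / μ) ^ ν * t ^ (2 * ν + 1) * qBessel2Series q ν (q / μ * r * t) := by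
  have harg : q * ((1 + q) / μ) * (r * t) / (1 + q) = q / μ * r * t := by
    field_simp
  have hsplit : (q / μ * r * t) ^ ν = (q / μ) ^ ν * (r * t) ^ ν := by
    rw [mul_assoc, Real.mul_rpow (by positivity) (by positivity)]
  have hrt : (r * t) ^ ν ≠ 0 := (Real.rpow_pos_of_pos (by positivity) ν).ne'
  rw [hankelKernel, qBessel2_eq, harg, hsplit]
  field_simp

lemma hankelKernel_inv_mul_mul (hq0 : 0 < q) (ht : 0 ≤ t) (ν : ℝ) :
    hankelKernel q μ ν (q⁻¹ * r) (q * t) = q ^ (2 * ν + 1) * hankelKernel q μ ν r t := by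
  have harg : q⁻¹ * r * (q * t) = r * t := by field_simp
  rw [hankelKernel, hankelKernel, harg, Real.mul_rpow hq0.le ht]
  ring

lemma hankelKernel_sub_hankelKernel_inv_mul (hq0 : 0 < q) (hq1 : q < 1) (hμ : 0 < μ)
    (hr : 0 < r) (ht : 0 < t) {ν : ℝ} (hν : 0 < ν) :
    hankelKernel q μ (ν - 1) r t - hankelKernel q μ (ν - 1) (q⁻¹ * r) t =
      (1 - q ^ 2) / μ * r ^ 2 * hankelKernel q μ ν r t := by
  have hd : 0 < q / μ := by positivity
  have hz : q / μ * (q⁻¹ * r) * t = q / μ * r * t / q := by field_simp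
  have hq_exp : q ^ (ν ^ 2) = q ^ ((ν - 1) ^ 2) * q ^ (2 * ν - 2) * q := by
    rw [← Real.rpow_add hq0, ← Real.rpow_add_one hq0.ne']
    ring_nf
  have hd_exp : (q / μ) ^ ν = (q / μ) ^ (ν - 1) * (q / μ) := by
    rw [← Real.rpow_add_one hd.ne']
    ring_nf
  have ht_exp : t ^ (2 * ν + 1) = t ^ (2 * (ν - 1) + 1) * t ^ 2 := by
    rw [← Real.rpow_natCast t 2, ← Real.rpow_add ht]
    ring_nf
  rw [hankelKernel_eq hq0 hμ hr ht, hankelKernel_eq hq0 hμ (by positivity) ht,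
    hankelKernel_eq hq0 hμ hr ht, hz, hq_exp, hd_exp, ht_exp]
  linear_combination q ^ ((ν - 1) ^ 2) * (q / μ) ^ (ν - 1) * t ^ (2 * (ν - 1) + 1) *
    qBessel2Series_sub_div hq0 hq1 hν (q / μ * r * t)

lemma exists_abs_hankelKernel_le (hq0 : 0 < q) (hq1 : q < 1) (hμ : 0 < μ) (hr : 0 < r) {ν : ℝ}
    (hν : -1 < ν) : ∃ K ρ : ℝ, 0 ≤ K ∧ 0 ≤ ρ ∧ ∀ t, 0 < t →
      |hankelKernel q μ ν r t| ≤ K * t ^ (2 * ν + 1) * partialTheta (q ^ 2) (ρ * t ^ 2) := by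
  obtain ⟨C, ρ, hρ, hc⟩ := exists_abs_qBessel2Coeff_le hq0 hq1 hν
  have hC : 0 ≤ C := by simpa using (abs_nonneg _).trans (hc 0)
  refine ⟨q ^ (ν ^ 2) * (q / μ) ^ ν * C, ρ * (q / μ * r) ^ 2, by positivity, by positivity,
    fun t ht => ?_⟩
  have hS := abs_tsum_mul_pow_le (by positivity) (by nlinarith) hc ((q / μ * r * t) ^ 2)
  simp only [← pow_mul] at hS
  rw [hankelKernel_eq hq0 hμ hr ht, abs_mul, abs_of_pos (by positivity), qBessel2Series]
  calc q ^ (ν ^ 2) * (q / μ) ^ ν * t ^ (2 * ν + 1) * |∑' i, qBessel2Coeff q ν i * _|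
      ≤ q ^ (ν ^ 2) * (q / μ) ^ ν * t ^ (2 * ν + 1) *
          (C * partialTheta (q ^ 2) (ρ * |(q / μ * r * t) ^ 2|)) := by gcongr
    _ = _ := by rw [abs_of_nonneg (by positivity)]; ring_nf

end HankelKernel

-- `jacksonInf` is a `tsum`, which is `0` when this fails.
def JacksonIntegrable (q γ : ℝ) (g : ℝ → ℝ) : Prop :=
  Summable fun k : ℤ => g (q ^ k * γ) * q ^ k

section Jackson

variable {q γ : ℝ} {f g : ℝ → ℝ}

lemma JacksonIntegrable.const_mul (hf : JacksonIntegrable q γ f) (c : ℝ) :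
    JacksonIntegrable q γ fun t => c * f t := by
  simpa [JacksonIntegrable, mul_assoc] using hf.mul_left c

lemma jacksonInf_const_mul (c : ℝ) :
    jacksonInf q γ (fun t => c * f t) = c * jacksonInf q γ f := by
  simp only [jacksonInf, mul_assoc, tsum_mul_left]
  ring

lemma jacksonInf_sub (hf : JacksonIntegrable q γ f) (hg : JacksonIntegrable q γ g) :
    jacksonInf q γ (fun t => f t - g t) = jacksonInf q γ f - jacksonInf q γ g := by
  simp only [jacksonInf, sub_mul, hf.tsum_sub hg, mul_sub]

lemma jacksonInf_congr (hq : 0 < q) (hγ : 0 < γ) (h : ∀ t, 0 < t → f t = g t) :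
    jacksonInf q γ f = jacksonInf q γ g := by
  unfold jacksonInf
  rw [tsum_congr fun k : ℤ => by rw [h (q ^ k * γ) (by positivity)]]

lemma apply_mul_zpow_mul_mul_zpow (hq : q ≠ 0) (f : ℝ → ℝ) (k : ℤ) :
    f (q * (q ^ k * γ)) * q ^ k = q⁻¹ * (f (q ^ (k + 1) * γ) * q ^ (k + 1)) := by
  rw [zpow_add_one₀ hq]; field_simp

lemma jacksonInf_comp_mul (hq : q ≠ 0) :
    jacksonInf q γ (fun t => f (q * t)) = q⁻¹ * jacksonInf q γ f := by
  have hreindex := (Equiv.addRight (1 : ℤ)).tsum_eq fun k => f (q ^ k * γ) * q ^ k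
  simp only [Equiv.coe_addRight] at hreindex
  rw [jacksonInf, jacksonInf, tsum_congr (apply_mul_zpow_mul_mul_zpow hq f), tsum_mul_left,
    hreindex]
  ring

lemma JacksonIntegrable.comp_mul (hq : q ≠ 0) (hf : JacksonIntegrable q γ f) :
    JacksonIntegrable q γ fun t => f (q * t) := by
  simpa [JacksonIntegrable, apply_mul_zpow_mul_mul_zpow hq f] using
    ((Equiv.addRight (1 : ℤ)).summable_iff.2 hf).mul_left q⁻¹

end Jackson

section GaussianDecay

variable {P : ℝ}

-- With `Q = P⁸` the exponents obey `8i² - 8ni ≥ 2i² - 3n²`, so at `a Q^{-n}` the theta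
-- series loses at most `P^{-3n²}`, while the `n`-th term of `E_Q` at `w Q^{-n}` is `P^{-4n²}`
-- times an exponential in `n`.
lemma partialTheta_div_pow_le (hP0 : 0 < P) (hP1 : P < 1) {a : ℝ} (ha : 0 ≤ a) (n : ℕ) :
    partialTheta (P ^ 8) (a / (P ^ 8) ^ n) ≤ partialTheta (P ^ 2) a / P ^ (3 * (n * n)) := by
  have hterm : ∀ i : ℕ, (P ^ 8) ^ (i * i) * (a / (P ^ 8) ^ n) ^ i ≤
      (P ^ 2) ^ (i * i) * a ^ i / P ^ (3 * (n * n)) := fun i => by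
    have hexp : 2 * (i * i) + 8 * (n * i) ≤ 8 * (i * i) + 3 * (n * n) := by
      zify; nlinarith [sq_nonneg (3 * (i : ℤ) - 2 * n), sq_nonneg (n : ℤ)]
    have hle : P ^ (8 * (i * i)) * P ^ (3 * (n * n)) ≤ P ^ (2 * (i * i)) * P ^ (8 * (n * i)) := by
      rw [← pow_add, ← pow_add]
      exact pow_le_pow_of_le_one hP0.le hP1.le hexp
    calc (P ^ 8) ^ (i * i) * (a / (P ^ 8) ^ n) ^ i
        = a ^ i * P ^ (8 * (i * i)) / P ^ (8 * (n * i)) := by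
          rw [div_pow, ← pow_mul, ← pow_mul, ← pow_mul]; ring_nf
      _ ≤ a ^ i * P ^ (2 * (i * i)) / P ^ (3 * (n * n)) := by
          rw [div_le_div_iff₀ (by positivity) (by positivity), mul_assoc, mul_assoc]
          exact mul_le_mul_of_nonneg_left hle (by positivity)
      _ = (P ^ 2) ^ (i * i) * a ^ i / P ^ (3 * (n * n)) := by rw [← pow_mul]; ring
  rw [partialTheta, partialTheta, ← tsum_div_const]
  have hP2 : P ^ 2 < 1 := pow_lt_one₀ hP0.le hP1 (by norm_num)
  have hP8 : P ^ 8 < 1 := pow_lt_one₀ hP0.le hP1 (by norm_num)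
  exact Summable.tsum_le_tsum hterm (summable_pow_mul_self_mul_pow (by positivity) hP8 _)
    ((summable_pow_mul_self_mul_pow (by positivity) hP2 a).div_const _)

lemma inv_qExpE_div_pow_le (hP0 : 0 < P) (hP1 : P < 1) {w : ℝ} (hw : 0 < w) (n : ℕ) :
    (qExpE (P ^ 8) (w / (P ^ 8) ^ n))⁻¹ ≤
      P ^ (3 * (n * n)) * (P ^ (n * n) * (P ^ 4 / ((1 - P ^ 8) * w)) ^ n) := by
  have hQ1 : P ^ 8 < 1 := pow_lt_one₀ hP0.le hP1 (by norm_num)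
  have hD := pow_mul_le_qExpE (by positivity) hQ1 (by positivity : 0 ≤ w / (P ^ 8) ^ n) n
  have hQ : 0 < 1 - P ^ 8 := by linarith
  refine (inv_anti₀ (by positivity) hD).trans_eq ?_
  have hexp : 8 * (n * n) = 4 * (n * (n - 1)) + 3 * (n * n) + n * n + 4 * n := by
    rcases n with _ | n
    · rfl
    · simp only [Nat.add_sub_cancel]; ring
  rw [pow_half_pred_mul_eq (P := P ^ 4) (by ring) n, mul_div_assoc', div_pow, div_pow, mul_pow,
    ← pow_mul, ← pow_mul, ← pow_mul, hexp]
  field_simp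
  ring

lemma partialTheta_div_qExpE_le (hP0 : 0 < P) (hP1 : P < 1) {a w : ℝ} (ha : 0 ≤ a) (hw : 0 < w)
    (n : ℕ) : partialTheta (P ^ 8) (a / (P ^ 8) ^ n) / qExpE (P ^ 8) (w / (P ^ 8) ^ n) ≤
      partialTheta (P ^ 2) a * (P ^ (n * n) * (P ^ 4 / ((1 - P ^ 8) * w)) ^ n) := by
  have hΘ : 0 ≤ partialTheta (P ^ 2) a := partialTheta_nonneg (by positivity) ha
  rw [div_eq_mul_inv]
  refine (mul_le_mul (partialTheta_div_pow_le hP0 hP1 ha n) (inv_qExpE_div_pow_le hP0 hP1 hw n)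
    (inv_nonneg.2 (qExpE_pos (by positivity) (pow_lt_one₀ hP0.le hP1 (by norm_num))
      (by positivity)).le) (by positivity)).trans_eq ?_
  field_simp

end GaussianDecay

lemma rpow_zpow_mul_mul_zpow {q γ : ℝ} (hq0 : 0 < q) (hγ : 0 ≤ γ) (a : ℝ) (k : ℤ) :
    (q ^ k * γ) ^ a * q ^ k = γ ^ a * (q ^ (a + 1)) ^ k := by
  rw [Real.mul_rpow (zpow_pos hq0 k).le hγ, ← Real.rpow_zpow_comm hq0.le,
    Real.rpow_add_one hq0.ne', mul_zpow]
  ring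

def thetaMajorant (q a ρ c : ℝ) (B : ℕ) (t : ℝ) : ℝ :=
  t ^ a * max 1 t ^ B * partialTheta (q ^ 2) (ρ * t ^ 2) / qExpE (q ^ 2) (c * t ^ 2)

section Majorant

variable {q γ a ρ c : ℝ} {B : ℕ}

lemma summable_thetaMajorant_nat (hq0 : 0 < q) (hq1 : q < 1) (hγ : 0 < γ) (ha : -1 < a)
    (hρ : 0 ≤ ρ) (hc : 0 < c) :
    Summable fun n : ℕ => thetaMajorant q a ρ c B (q ^ (n : ℤ) * γ) * q ^ (n : ℤ) := by
  have hQ0 : 0 < q ^ 2 := by positivity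
  have hQ1 : q ^ 2 < 1 := by nlinarith
  have hqa : q ^ (a + 1) < 1 := Real.rpow_lt_one hq0.le hq1 (by linarith)
  set M := γ ^ a * max 1 γ ^ B * partialTheta (q ^ 2) (ρ * γ ^ 2)
  refine Summable.of_nonneg_of_le (fun n => ?_) (fun n => ?_)
    ((summable_geometric_of_lt_one (by positivity) hqa).mul_left M)
  all_goals
    set t := q ^ (n : ℤ) * γ with ht_def
    have ht : 0 < t := by positivity
    have hE := one_le_qExpE hQ0 hQ1 (by positivity : 0 ≤ c * t ^ 2)
    have hΘ0 := partialTheta_nonneg hQ0.le (by positivity : 0 ≤ ρ * t ^ 2)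
    unfold thetaMajorant
  · positivity
  have htγ : t ≤ γ := by
    rw [ht_def, zpow_natCast]; exact mul_le_of_le_one_left hγ.le (pow_le_one₀ hq0.le hq1.le)
  have hΘ := partialTheta_mono hQ0.le hQ1 (by positivity) (by gcongr : ρ * t ^ 2 ≤ ρ * γ ^ 2)
  have hpow : t ^ a * q ^ (n : ℤ) = γ ^ a * (q ^ (a + 1)) ^ n := by
    rw [ht_def, rpow_zpow_mul_mul_zpow hq0 hγ.le, zpow_natCast]
  calc _ = t ^ a * q ^ (n : ℤ) *
        (max 1 t ^ B * partialTheta (q ^ 2) (ρ * t ^ 2) / qExpE (q ^ 2) (c * t ^ 2)) := by ring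
    _ ≤ t ^ a * q ^ (n : ℤ) * (max 1 γ ^ B * partialTheta (q ^ 2) (ρ * γ ^ 2)) := by
        refine mul_le_mul_of_nonneg_left ((div_le_self (by positivity) hE).trans ?_)
          (by positivity)
        gcongr
    _ = M * (q ^ (a + 1)) ^ n := by rw [hpow]; ring

lemma summable_thetaMajorant_neg (hq0 : 0 < q) (hq1 : q < 1) (hγ : 0 < γ) (hρ : 0 ≤ ρ)
    (hc : 0 < c) :
    Summable fun n : ℕ =>
      thetaMajorant q a ρ c B (q ^ (-(n : ℤ)) * γ) * q ^ (-(n : ℤ)) := by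
  set P := q ^ ((1 : ℝ) / 4)
  have hP0 : 0 < P := Real.rpow_pos_of_pos hq0 _
  have hP1 : P < 1 := Real.rpow_lt_one hq0.le hq1 (by norm_num)
  have hP8 : P ^ 8 = q ^ 2 := by
    rw [← Real.rpow_natCast, ← Real.rpow_mul hq0.le]; norm_num
  have hQ1 : P ^ 8 < 1 := pow_lt_one₀ hP0.le hP1 (by norm_num)
  set γ₁ := max 1 γ
  set b := (q ^ (a + 1))⁻¹ * (q⁻¹) ^ B * (P ^ 4 / ((1 - P ^ 8) * (c * γ ^ 2)))
  set M := γ ^ a * γ₁ ^ B * partialTheta (P ^ 2) (ρ * γ ^ 2)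
  refine Summable.of_nonneg_of_le (fun n => ?_) (fun n => ?_)
    ((summable_pow_mul_self_mul_pow hP0.le hP1 b).mul_left M)
  all_goals
    set t := q ^ (-(n : ℤ)) * γ with ht_def
    have hqn : q ^ (-(n : ℤ)) = (q⁻¹) ^ n := by rw [zpow_neg, zpow_natCast, inv_pow]
    have hsq : ∀ x : ℝ, x * t ^ 2 = x * γ ^ 2 / (P ^ 8) ^ n := fun x => by
      rw [ht_def, hqn, hP8, inv_pow]; field_simp; ring
    have hE := qExpE_pos (by positivity) hQ1 (by positivity : 0 ≤ c * γ ^ 2 / (P ^ 8) ^ n)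
    have hΘ0 := partialTheta_nonneg (by positivity : 0 ≤ P ^ 8)
      (by positivity : 0 ≤ ρ * γ ^ 2 / (P ^ 8) ^ n)
    unfold thetaMajorant
    rw [hsq, hsq, ← hP8]
  · positivity
  have hmax : max 1 t ≤ γ₁ * (q⁻¹) ^ n := by
    have h1 : 1 ≤ (q⁻¹) ^ n := one_le_pow₀ (one_le_inv₀ hq0 |>.2 hq1.le)
    rw [ht_def, hqn]
    exact max_le (by nlinarith [le_max_left 1 γ]) (by nlinarith [le_max_right 1 γ])
  have hkey := partialTheta_div_qExpE_le hP0 hP1 (by positivity : 0 ≤ ρ * γ ^ 2)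
    (by positivity : 0 < c * γ ^ 2) n
  have hpow : t ^ a * q ^ (-(n : ℤ)) = γ ^ a * ((q ^ (a + 1))⁻¹) ^ n := by
    rw [ht_def, rpow_zpow_mul_mul_zpow hq0 hγ.le, zpow_neg, zpow_natCast, inv_pow]
  calc _ = t ^ a * q ^ (-(n : ℤ)) * max 1 t ^ B *
        (partialTheta (P ^ 8) (ρ * γ ^ 2 / (P ^ 8) ^ n) /
          qExpE (P ^ 8) (c * γ ^ 2 / (P ^ 8) ^ n)) := by ring
    _ ≤ γ ^ a * ((q ^ (a + 1))⁻¹) ^ n * (γ₁ * (q⁻¹) ^ n) ^ B *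
          (partialTheta (P ^ 2) (ρ * γ ^ 2) *
            (P ^ (n * n) * (P ^ 4 / ((1 - P ^ 8) * (c * γ ^ 2))) ^ n)) := by
        rw [hpow]; gcongr
    _ = M * (P ^ (n * n) * b ^ n) := by simp only [M, b, mul_pow]; ring

lemma jacksonIntegrable_thetaMajorant (hq0 : 0 < q) (hq1 : q < 1) (hγ : 0 < γ)
    (ha : -1 < a) (hρ : 0 ≤ ρ) (hc : 0 < c) :
    JacksonIntegrable q γ (thetaMajorant q a ρ c B) :=
  Summable.of_nat_of_neg (summable_thetaMajorant_nat hq0 hq1 hγ ha hρ hc)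
    (summable_thetaMajorant_neg hq0 hq1 hγ hρ hc)

lemma jacksonIntegrable_hankelKernel_mul (hq0 : 0 < q) (hq1 : q < 1) (hγ : 0 < γ) {μ r ν : ℝ}
    (hμ : 0 < μ) (hr : 0 < r) (hν : -1 < ν) {C : ℝ} (hc : 0 < c) {g : ℝ → ℝ}
    (hg : ∀ t, 0 < t → |g t| ≤ C * max 1 t ^ B / qExpE (q ^ 2) (c * t ^ 2)) :
    JacksonIntegrable q γ fun t => hankelKernel q μ ν r t * g t := by
  obtain ⟨K, ρ, hK, hρ, hker⟩ := exists_abs_hankelKernel_le hq0 hq1 hμ hr hν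
  refine (((jacksonIntegrable_thetaMajorant hq0 hq1 hγ (by linarith : -1 < 2 * ν + 1) hρ hc
    (B := B)).const_mul (K * C))).of_norm_bounded fun k => ?_
  have ht : 0 < q ^ k * γ := by positivity
  have hΘ := partialTheta_nonneg (by positivity : 0 ≤ q ^ 2) (by positivity :
    0 ≤ ρ * (q ^ k * γ) ^ 2)
  rw [Real.norm_eq_abs, abs_mul, abs_mul, abs_of_pos (zpow_pos hq0 k)]
  calc |hankelKernel q μ ν r (q ^ k * γ)| * |g (q ^ k * γ)| * q ^ k
      ≤ K * (q ^ k * γ) ^ (2 * ν + 1) * partialTheta (q ^ 2) (ρ * (q ^ k * γ) ^ 2) *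
          (C * max 1 (q ^ k * γ) ^ B / qExpE (q ^ 2) (c * (q ^ k * γ) ^ 2)) * q ^ k := by
        gcongr
        exacts [hker _ ht, hg _ ht]
    _ = _ := by unfold thetaMajorant; ring

end Majorant

section HankelJackson

variable {q μ γ r : ℝ} {g : ℝ → ℝ}

lemma jacksonInf_hankelKernel_sub (hq0 : 0 < q) (hq1 : q < 1) (hγ : 0 < γ) (hμ : 0 < μ)
    (hr : 0 < r) {ν : ℝ} (hν : 0 < ν)
    (h₁ : JacksonIntegrable q γ fun t => hankelKernel q μ (ν - 1) r t * g t)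
    (h₂ : JacksonIntegrable q γ fun t => hankelKernel q μ (ν - 1) (q⁻¹ * r) t * g t) :
    jacksonInf q γ (fun t => hankelKernel q μ (ν - 1) r t * g t) -
        jacksonInf q γ (fun t => hankelKernel q μ (ν - 1) (q⁻¹ * r) t * g t) =
      (1 - q ^ 2) / μ * r ^ 2 * jacksonInf q γ fun t => hankelKernel q μ ν r t * g t := by
  rw [← jacksonInf_sub h₁ h₂, ← jacksonInf_const_mul]
  refine jacksonInf_congr hq0 hγ fun t ht => ?_
  rw [← sub_mul, hankelKernel_sub_hankelKernel_inv_mul hq0 hq1 hμ hr ht hν]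
  ring

/-- The dilation law of the kernel moves the `g (q t)` part of `t ∂_q g(t)` onto the kernel. -/
lemma jacksonInf_hankelKernel_mul_qDeriv (hq0 : 0 < q) (hγ : 0 < γ) {ν : ℝ}
    (h₁ : JacksonIntegrable q γ fun t => hankelKernel q μ ν r t * g t)
    (h₂ : JacksonIntegrable q γ fun t => hankelKernel q μ ν (q⁻¹ * r) t * g t) :
    jacksonInf q γ (fun t => hankelKernel q μ ν r t * (t * qDeriv q g t)) =
      (q - 1)⁻¹ * ((q ^ (2 * ν + 2))⁻¹ *
        jacksonInf q γ (fun t => hankelKernel q μ ν (q⁻¹ * r) t * g t) -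
          jacksonInf q γ fun t => hankelKernel q μ ν r t * g t) := by
  have hq : q ≠ 0 := hq0.ne'
  set h : ℝ → ℝ := fun s => (q ^ (2 * ν + 1))⁻¹ * (hankelKernel q μ ν (q⁻¹ * r) s * g s)
  have hshift : jacksonInf q γ (fun t => h (q * t)) =
      (q ^ (2 * ν + 2))⁻¹ * jacksonInf q γ fun t => hankelKernel q μ ν (q⁻¹ * r) t * g t := by
    have hexp : q * q ^ (2 * ν + 1) = q ^ (2 * ν + 2) := by
      rw [mul_comm, ← Real.rpow_add_one hq]; ring_nf
    rw [jacksonInf_comp_mul hq, jacksonInf_const_mul, ← mul_assoc, ← mul_inv, hexp]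
  rw [← hshift, ← jacksonInf_sub ((h₂.const_mul _).comp_mul hq) h₁, ← jacksonInf_const_mul]
  refine jacksonInf_congr hq0 hγ fun t ht => ?_
  simp only [qDeriv, hankelKernel_inv_mul_mul hq0 ht.le]
  field_simp

end HankelJackson

lemma abs_eval_le_mul_max_pow (p : Polynomial ℝ) (x : ℝ) :
    |p.eval x| ≤ (∑ i ∈ range (p.natDegree + 1), |p.coeff i|) * max 1 |x| ^ p.natDegree := by
  rw [Polynomial.eval_eq_sum_range, sum_mul]
  refine (abs_sum_le_sum_abs _ _).trans (sum_le_sum fun i hi => ?_)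
  rw [abs_mul, abs_pow]
  gcongr
  calc |x| ^ i ≤ max 1 |x| ^ i := by gcongr; exact le_max_right _ _
    _ ≤ max 1 |x| ^ p.natDegree :=
        pow_le_pow_right₀ (le_max_left _ _) (Nat.lt_succ_iff.1 (mem_range.1 hi))

lemma exists_abs_eval_sq_mul_qExpe_le (p : Polynomial ℝ) {Q c : ℝ} (hQ0 : 0 < Q) (hQ1 : Q < 1)
    (hc : 0 ≤ c) : ∃ C, ∀ t, 0 < t →
      |p.eval (t ^ 2) * qExpe Q (c * t ^ 2)| ≤
        C * max 1 t ^ (2 * p.natDegree) / qExpE Q (c * t ^ 2) := by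
  refine ⟨∑ i ∈ range (p.natDegree + 1), |p.coeff i|, fun t ht => ?_⟩
  have hE := qExpE_pos hQ0 hQ1 (by positivity : 0 ≤ c * t ^ 2)
  have hmax : max 1 |t ^ 2| ≤ max 1 t ^ 2 := by
    rw [abs_of_nonneg (by positivity)]
    exact max_le (one_le_pow₀ (le_max_left _ _)) (pow_le_pow_left₀ ht.le (le_max_right _ _) 2)
  rw [qExpe, abs_mul, abs_inv, abs_of_pos hE, ← div_eq_mul_inv, pow_mul]
  gcongr
  exact (abs_eval_le_mul_max_pow p _).trans (by gcongr)

theorem hankel2_derivative_identity_general (q : ℝ) (hq0 : 0 < q) (hq1 : q < 1)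
    (m : ℕ) (ν : ℝ) (hν : 1 / 2 ≤ ν)
    (α γ : ℝ) (hα : 0 < α) (hγ : 0 < γ) (p : Polynomial ℝ) :
    let μ : ℝ := 1 + q ^ ((2 : ℝ) - (m : ℝ))
    let f : ℝ → ℝ := fun t => p.eval (t ^ 2) * qExpe (q ^ 2) (α * q ^ 2 * t ^ 2 / μ)
    ∀ r : ℝ, 0 < r →
      hankel2 q μ (ν - 1) γ (fun t => t * qDeriv q f t) r =
        (1 + q) / μ * r ^ 2 * hankel2 q μ ν γ f r -
          qNum q (2 * ν) / q ^ (2 * ν) * hankel2 q μ (ν - 1) γ f (q⁻¹ * r) := by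
  intro μ f r hr
  have hμ : 0 < μ := by positivity
  obtain ⟨C, hbound⟩ := exists_abs_eval_sq_mul_qExpe_le p (by positivity : 0 < q ^ 2)
    (by nlinarith) (by positivity : 0 ≤ α * q ^ 2 / μ)
  have hf : ∀ t, 0 < t →
      |f t| ≤ C * max 1 t ^ (2 * p.natDegree) / qExpE (q ^ 2) (α * q ^ 2 / μ * t ^ 2) :=
    fun t ht => by simpa only [f, mul_div_right_comm] using hbound t ht
  have hint : ∀ {ν' r' : ℝ}, -1 < ν' → 0 < r' →
      JacksonIntegrable q γ fun t => hankelKernel q μ ν' r' t * f t := fun hν' hr' =>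
    jacksonIntegrable_hankelKernel_mul hq0 hq1 hγ hμ hr' hν' (by positivity) hf
  have h2ν : 2 * (ν - 1) + 2 = 2 * ν := by ring
  have hq2ν : q ^ (2 * ν) ≠ 0 := (Real.rpow_pos_of_pos hq0 _).ne'
  have hq1' : q - 1 ≠ 0 := by linarith
  rw [hankel2_eq_jacksonInf, hankel2_eq_jacksonInf, hankel2_eq_jacksonInf,
    jacksonInf_hankelKernel_mul_qDeriv hq0 hγ (hint (by linarith) hr)
      (hint (by linarith) (by positivity)), h2ν,
    sub_eq_iff_eq_add.1 (jacksonInf_hankelKernel_sub hq0 hq1 hγ hμ hr (by linarith)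
      (hint (by linarith) hr) (hint (by linarith) (by positivity))), qNum]
  field_simp
  ring

/-- derivative identity for the second q-Hankel transform. With
`μ = 1 + q^{2-m}`, `ν ≥ 1/2`, `α, γ > 0` and `f(t) = p(t²) e_{q²}(-αq²t²/μ)`, for `r > 0`:
`𝓗_{ν-1}[t ∂^q_t f](r) = ((1+q)/μ) r² 𝓗_ν[f](r) - ([2ν]_q/q^{2ν}) 𝓗_{ν-1}[f](q⁻¹r)`. -/
theorem hankel2_derivative_identity (q : ℝ) (hq0 : 0 < q) (hq1 : q < 1)
    (m : ℕ) (hm : 1 ≤ m) (ν : ℝ) (hν : 1 / 2 ≤ ν)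
    (α γ : ℝ) (hα : 0 < α) (hγ : 0 < γ) (p : Polynomial ℝ) :
    let μ : ℝ := 1 + q ^ ((2 : ℝ) - (m : ℝ))
    let f : ℝ → ℝ := fun t => p.eval (t ^ 2) * qExpe (q ^ 2) (α * q ^ 2 * t ^ 2 / μ)
    ∀ r : ℝ, 0 < r →
      hankel2 q μ (ν - 1) γ (fun t => t * qDeriv q f t) r =
        (1 + q) / μ * r ^ 2 * hankel2 q μ ν γ f r -
          qNum q (2 * ν) / q ^ (2 * ν) * hankel2 q μ (ν - 1) γ f (q⁻¹ * r) :=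
  hankel2_derivative_identity_general q hq0 hq1 m ν hν α γ hα hγ p
end
end

section
/- Invariance of the normalization constant d under shifting the parameter by one: for every real α > −1 and every γ > 0, both bilateral series below converge absolutely and q^{2(α+1)} · ∫_0^{γ·∞} u^{α+1} e_{q²}(−u) d_{q²}u = [α+1]_{q²} · ∫_0^{γ·∞} u^{α} e_{q²}(−u) d_{q²}u. (Equivalently, the function d(λ, α) = ( q^{α(α+1)} / Γ_{q²}(α+1) ) ∫_0^{λ²·∞} u^α e_{q²}(−u) d_{q²}u satisfies d(λ, α+1) = d(λ, α).) -/
open scoped BigOperators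

noncomputable section

section AuxLemmas
variable {p : ℝ}

lemma one_le_qNum_s19 (hp0 : 0 < p) (hp1 : p < 1) {x : ℝ} (hx : 1 ≤ x) : 1 ≤ qNum p x := by
  rw [qNum, le_div_iff_of_neg (by linarith : p - 1 < 0)]
  have h : p ^ x ≤ p ^ (1:ℝ) := Real.rpow_le_rpow_of_exponent_ge hp0 hp1.le hx
  rw [Real.rpow_one] at h; linarith

lemma one_le_qFact_s19 (hp0 : 0 < p) (hp1 : p < 1) (n : ℕ) : 1 ≤ qFact p n := by
  rw [qFact]
  calc (1:ℝ) = ∏ _i ∈ Finset.range n, 1 := by simp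
  _ ≤ ∏ i ∈ Finset.range n, qNum p ((i:ℝ)+1) :=
    Finset.prod_le_prod (fun i _ => zero_le_one)
      (fun i _ => one_le_qNum_s19 hp0 hp1 (le_add_of_nonneg_left (Nat.cast_nonneg i)))

lemma qFact_pos_s19 (hp0 : 0 < p) (hp1 : p < 1) (n : ℕ) : 0 < qFact p n :=
  lt_of_lt_of_le one_pos (one_le_qFact_s19 hp0 hp1 n)

lemma tri_succ (j : ℕ) : (j+1)*j/2 = j*(j-1)/2 + j := by
  cases j with
  | zero => rfl
  | succ m =>
    have h : (m+1+1)*(m+1) = (m+1)*m + 2*(m+1) := by ring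
    simp only [Nat.succ_sub_one]
    rw [h, Nat.add_mul_div_left _ _ (by norm_num : 0 < 2)]

lemma summable_qExpE_terms (hp0 : 0 < p) (hp1 : p < 1) {u : ℝ} (hu : 0 ≤ u) :
    Summable (fun j : ℕ => p ^ (j*(j-1)/2) * u ^ j / qFact p j) := by
  obtain ⟨J, hJ⟩ : ∃ J : ℕ, p ^ J * u ≤ 1/2 := by
    obtain ⟨J, hJ⟩ := exists_pow_lt_of_lt_one (show (0:ℝ) < 1/(2*(u+1)) by positivity) hp1
    refine ⟨J, ?_⟩
    have h2 : p ^ J * u ≤ (1/(2*(u+1))) * u :=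
      mul_le_mul_of_nonneg_right hJ.le hu
    have h3 : (1/(2*(u+1))) * u ≤ 1/2 := by
      rw [div_mul_eq_mul_div, div_le_div_iff₀ (by positivity) (by norm_num)]
      nlinarith
    linarith
  apply summable_of_ratio_norm_eventually_le (r := 1/2) (by norm_num)
  filter_upwards [Filter.eventually_ge_atTop J] with j hj
  have hF := qFact_pos_s19 hp0 hp1 j
  have hN : 1 ≤ qNum p ((j:ℝ)+1) :=
    one_le_qNum_s19 hp0 hp1 (le_add_of_nonneg_left j.cast_nonneg)
  have hsucc : qFact p (j+1) = qFact p j * qNum p ((j:ℝ)+1) := Finset.prod_range_succ _ _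
  have heq : p ^ ((j+1)*j/2) * u ^ (j+1) / qFact p (j+1)
      = (p ^ j * u / qNum p ((j:ℝ)+1)) * (p ^ (j*(j-1)/2) * u ^ j / qFact p j) := by
    rw [hsucc, tri_succ j, pow_add, pow_succ]
    ring
  have hterm : (0:ℝ) ≤ p ^ (j*(j-1)/2) * u ^ j / qFact p j :=
    div_nonneg (by positivity) hF.le
  have hratio : p ^ j * u / qNum p ((j:ℝ)+1) ≤ 1/2 := by
    have h1 : p ^ j * u / qNum p ((j:ℝ)+1) ≤ p ^ j * u :=
      div_le_self (by positivity) hN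
    have h2 : p ^ j ≤ p ^ J := pow_le_pow_of_le_one hp0.le hp1.le hj
    have h3 : p ^ j * u ≤ p ^ J * u := mul_le_mul_of_nonneg_right h2 hu
    linarith
  have hterm1 : (0:ℝ) ≤ p ^ ((j+1)*(j+1-1)/2) * u ^ (j+1) / qFact p (j+1) :=
    div_nonneg (by positivity) (qFact_pos_s19 hp0 hp1 (j+1)).le
  rw [Real.norm_eq_abs, Real.norm_eq_abs, abs_of_nonneg hterm1,
    abs_of_nonneg hterm, Nat.add_sub_cancel, heq]
  exact mul_le_mul_of_nonneg_right hratio hterm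

lemma term_le_qExpE (hp0 : 0 < p) (hp1 : p < 1) {u : ℝ} (hu : 0 ≤ u) (N : ℕ) :
    p ^ (N*(N-1)/2) * u ^ N / qFact p N ≤ qExpE p u :=
  Summable.le_tsum (summable_qExpE_terms hp0 hp1 hu) N
    (fun j _ => div_nonneg (by positivity) (qFact_pos_s19 hp0 hp1 j).le)

lemma one_le_qExpE_s19 (hp0 : 0 < p) (hp1 : p < 1) {u : ℝ} (hu : 0 ≤ u) : 1 ≤ qExpE p u := by
  have h := term_le_qExpE hp0 hp1 hu 0
  simpa [qFact] using h

lemma qExpE_pos_s19 (hp0 : 0 < p) (hp1 : p < 1) {u : ℝ} (hu : 0 ≤ u) : 0 < qExpE p u :=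
  lt_of_lt_of_le one_pos (one_le_qExpE_s19 hp0 hp1 hu)

lemma qNum_eq (hp0 : 0 < p) (hp1 : p < 1) (j : ℕ) :
    qNum p ((j:ℝ)+1) = (1 - p^(j+1))/(1-p) := by
  rw [qNum, show ((j:ℝ)+1) = ((j+1 : ℕ) : ℝ) by push_cast; ring, Real.rpow_natCast]
  rw [div_eq_div_iff (by linarith) (by linarith)]
  ring

lemma qExpE_shift (hp0 : 0 < p) (hp1 : p < 1) {u : ℝ} (hu : 0 ≤ u) :
    qExpE p u = (1 + (1 - p) * u) * qExpE p (p * u) := by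
  have hpu : 0 ≤ p * u := by positivity
  set fU : ℕ → ℝ := fun j => p ^ (j*(j-1)/2) * u ^ j / qFact p j with hfU
  set fP : ℕ → ℝ := fun j => p ^ (j*(j-1)/2) * (p*u) ^ j / qFact p j with hfP
  have hsU : Summable fU := summable_qExpE_terms hp0 hp1 hu
  have hsP : Summable fP := summable_qExpE_terms hp0 hp1 hpu
  have hD : Summable (fun j => fU j - fP j) := hsU.sub hsP
  have h0 : fU 0 - fP 0 = 0 := by simp [hfU, hfP]
  have hsucc : ∀ j : ℕ, fU (j+1) - fP (j+1) = (1-p)*u * fP j := by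
    intro j
    have hFs : qFact p (j+1) = qFact p j * qNum p ((j:ℝ)+1) := Finset.prod_range_succ _ _
    have hFne : qFact p j ≠ 0 := (qFact_pos_s19 hp0 hp1 j).ne'
    have hpj : p^(j+1) < 1 := pow_lt_one₀ hp0.le hp1 (Nat.succ_ne_zero j)
    simp only [hfU, hfP]
    have hne1 : (1:ℝ) - p ≠ 0 := by linarith
    have hne2 : (1:ℝ) - p^(j+1) ≠ 0 := by nlinarith
    rw [hFs, Nat.add_sub_cancel, tri_succ j, qNum_eq hp0 hp1 j, pow_add, pow_succ, mul_pow]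
    field_simp
    ring
  have h1 : ∑' j, (fU j - fP j) = (1-p)*u*qExpE p (p*u) := by
    rw [Summable.tsum_eq_zero_add hD, h0, zero_add]
    calc ∑' j, (fU (j+1) - fP (j+1)) = ∑' j, (1-p)*u*fP j := by simp only [hsucc]
    _ = (1-p)*u*∑' j, fP j := tsum_mul_left
    _ = (1-p)*u*qExpE p (p*u) := rfl
  have h2 : ∑' j, (fU j - fP j) = qExpE p u - qExpE p (p*u) := Summable.tsum_sub hsU hsP
  linear_combination h2.symm.trans h1

lemma qExpe_shift (hp0 : 0 < p) (hp1 : p < 1) {u : ℝ} (hu : 0 ≤ u) :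
    qExpe p (p * u) = (1 + (1 - p) * u) * qExpe p u := by
  have hden : (0:ℝ) < 1 + (1 - p) * u := by nlinarith
  rw [qExpe, qExpe, qExpE_shift hp0 hp1 hu, mul_inv, ← mul_assoc,
    mul_inv_cancel₀ hden.ne', one_mul]

lemma rpow_pow_comm (hp : 0 ≤ p) (β : ℝ) (n : ℕ) : ((p ^ n : ℝ)) ^ β = (p ^ β) ^ n := by
  rw [← Real.rpow_natCast p n, ← Real.rpow_mul hp, mul_comm, Real.rpow_mul hp,
    Real.rpow_natCast]

lemma qExpe_nonneg (hp0 : 0 < p) (hp1 : p < 1) {u : ℝ} (hu : 0 ≤ u) : 0 ≤ qExpe p u :=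
  inv_nonneg.2 (qExpE_pos_s19 hp0 hp1 hu).le

lemma qExpe_le_one (hp0 : 0 < p) (hp1 : p < 1) {u : ℝ} (hu : 0 ≤ u) : qExpe p u ≤ 1 :=
  inv_le_one_of_one_le₀ (one_le_qExpE_s19 hp0 hp1 hu)

lemma qExpe_le (hp0 : 0 < p) (hp1 : p < 1) (N : ℕ) {u : ℝ} (hu : 0 < u) :
    qExpe p u ≤ qFact p N / (p ^ (N*(N-1)/2) * u ^ N) := by
  have hFpos := qFact_pos_s19 hp0 hp1 N
  have hterm : (0:ℝ) < p ^ (N*(N-1)/2) * u ^ N / qFact p N := by positivity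
  have h := term_le_qExpE hp0 hp1 hu.le N
  calc qExpe p u = (qExpE p u)⁻¹ := rfl
  _ ≤ (p ^ (N*(N-1)/2) * u ^ N / qFact p N)⁻¹ := by
      exact inv_anti₀ hterm h
  _ = qFact p N / (p ^ (N*(N-1)/2) * u ^ N) := by rw [inv_div]

lemma summable_bilateral (hp0 : 0 < p) (hp1 : p < 1) {β : ℝ} (hβ : -1 < β)
    {γ : ℝ} (hγ : 0 < γ) :
    Summable (fun k : ℤ => (p ^ k * γ) ^ β * qExpe p (p ^ k * γ) * p ^ k) := by
  have hxpos : ∀ k : ℤ, (0:ℝ) < p ^ k := fun k => zpow_pos hp0 k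
  have hupos : ∀ k : ℤ, (0:ℝ) < p ^ k * γ := fun k => mul_pos (hxpos k) hγ
  have hnn : ∀ k : ℤ, 0 ≤ (p ^ k * γ) ^ β * qExpe p (p ^ k * γ) * p ^ k := fun k =>
    mul_nonneg (mul_nonneg (Real.rpow_nonneg (hupos k).le β)
      (qExpe_nonneg hp0 hp1 (hupos k).le)) (hxpos k).le
  apply Summable.of_nat_of_neg
  · -- nonnegative indices
    apply Summable.of_nonneg_of_le (f := fun n : ℕ => γ ^ β * (p ^ (β+1)) ^ n)
      (fun n => hnn n)
    · intro n
      have h1 : qExpe p (p ^ (n:ℤ) * γ) ≤ 1 := qExpe_le_one hp0 hp1 (hupos n).le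
      calc (p ^ (n:ℤ) * γ) ^ β * qExpe p (p ^ (n:ℤ) * γ) * p ^ (n:ℤ)
          ≤ (p ^ (n:ℤ) * γ) ^ β * 1 * p ^ (n:ℤ) := by
            apply mul_le_mul_of_nonneg_right _ (hxpos n).le
            exact mul_le_mul_of_nonneg_left h1 (Real.rpow_nonneg (hupos n).le β)
      _ = γ ^ β * (p ^ (β+1)) ^ n := by
            rw [zpow_natCast, mul_one, Real.mul_rpow (by positivity) hγ.le,
              rpow_pow_comm hp0.le, Real.rpow_add_one hp0.ne', mul_pow]
            ring
    · exact (summable_geometric_of_lt_one (by positivity)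
        (Real.rpow_lt_one hp0.le hp1 (by linarith))).mul_left _
  · -- negative indices
    set N : ℕ := ⌈β⌉₊ + 2 with hN
    have hNβ : β + 1 < (N:ℝ) := by
      have := Nat.le_ceil β
      push_cast [hN]
      linarith
    set F : ℝ := qFact p N with hF
    set P : ℝ := p ^ (N*(N-1)/2) with hP
    have hFpos : 0 < F := qFact_pos_s19 hp0 hp1 N
    have hPpos : 0 < P := by positivity
    have key : ∀ n : ℕ, ((p:ℝ)^(-(n:ℤ)))^(β-(N:ℝ)) * (p:ℝ)^(-(n:ℤ))
        = (p ^ ((N:ℝ)-β-1)) ^ n := by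
      intro n
      have h1 : (p:ℝ)^(-(n:ℤ)) = p ^ (-(n:ℝ)) := by
        rw [← Real.rpow_intCast p (-(n:ℤ)), Int.cast_neg, Int.cast_natCast]
      rw [h1, ← Real.rpow_natCast (p ^ ((N:ℝ)-β-1)) n, ← Real.rpow_mul hp0.le,
        ← Real.rpow_mul hp0.le, ← Real.rpow_add hp0]
      congr 1
      ring
    apply Summable.of_nonneg_of_le
      (f := fun n : ℕ => (F / P * γ ^ (β-(N:ℝ))) * (p ^ ((N:ℝ)-β-1)) ^ n)
      (fun n => hnn (-(n:ℤ)))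
    · intro n
      have hx : (0:ℝ) < p ^ (-(n:ℤ)) := hxpos _
      have hu : (0:ℝ) < p ^ (-(n:ℤ)) * γ := hupos _
      have h1 : qExpe p (p ^ (-(n:ℤ)) * γ) ≤ F / (P * (p ^ (-(n:ℤ)) * γ) ^ N) :=
        qExpe_le hp0 hp1 N hu
      calc (p ^ (-(n:ℤ)) * γ) ^ β * qExpe p (p ^ (-(n:ℤ)) * γ) * p ^ (-(n:ℤ))
          ≤ (p ^ (-(n:ℤ)) * γ) ^ β * (F / (P * (p ^ (-(n:ℤ)) * γ) ^ N)) * p ^ (-(n:ℤ)) := by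
            apply mul_le_mul_of_nonneg_right _ hx.le
            exact mul_le_mul_of_nonneg_left h1 (Real.rpow_nonneg hu.le β)
      _ = (F / P * γ ^ (β-(N:ℝ))) * (p ^ ((N:ℝ)-β-1)) ^ n := by
            rw [← key n,
              show γ ^ (β-(N:ℝ)) = γ ^ β / γ ^ (N:ℕ) by
                rw [← Real.rpow_natCast γ N, ← Real.rpow_sub hγ],
              show ((p:ℝ)^(-(n:ℤ)))^(β-(N:ℝ)) = (p^(-(n:ℤ)))^β / (p^(-(n:ℤ)))^(N:ℕ) by
                rw [← Real.rpow_natCast ((p:ℝ)^(-(n:ℤ))) N, ← Real.rpow_sub hx],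
              Real.mul_rpow hx.le hγ.le, mul_pow]
            field_simp
    · exact (summable_geometric_of_lt_one (by positivity)
        (Real.rpow_lt_one hp0.le hp1 (by linarith))).mul_left _

end AuxLemmas

/-- invariance of the normalization constant `d` under shifting the parameter
by one: for `α > -1` and `γ > 0`, both bilateral series converge absolutely and
`q^{2(α+1)} ∫_0^{γ·∞} u^{α+1} e_{q²}(-u) d_{q²}u = [α+1]_{q²} ∫_0^{γ·∞} u^α e_{q²}(-u) d_{q²}u`
(equivalently, `d(λ, α+1) = d(λ, α)`). -/
theorem qLag_d_shift (q : ℝ) (hq0 : 0 < q) (hq1 : q < 1)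
    (α : ℝ) (hα : -1 < α) (γ : ℝ) (hγ : 0 < γ) :
    Summable (fun k : ℤ =>
      ((q ^ 2 : ℝ) ^ k * γ) ^ (α + 1) * qExpe (q ^ 2) ((q ^ 2 : ℝ) ^ k * γ) *
        (q ^ 2 : ℝ) ^ k) ∧
    Summable (fun k : ℤ =>
      ((q ^ 2 : ℝ) ^ k * γ) ^ α * qExpe (q ^ 2) ((q ^ 2 : ℝ) ^ k * γ) *
        (q ^ 2 : ℝ) ^ k) ∧
    q ^ (2 * (α + 1)) * jacksonInf (q ^ 2) γ (fun u => u ^ (α + 1) * qExpe (q ^ 2) u) =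
      qNum (q ^ 2) (α + 1) * jacksonInf (q ^ 2) γ (fun u => u ^ α * qExpe (q ^ 2) u) := by
  have hp0 : 0 < q ^ 2 := by positivity
  have hp1 : q ^ 2 < 1 := by nlinarith
  set p : ℝ := q ^ 2 with hpdef
  have hα1 : (-1:ℝ) < α + 1 := by linarith
  have hB : Summable (fun k : ℤ => (p ^ k * γ) ^ (α+1) * qExpe p (p ^ k * γ) * p ^ k) :=
    summable_bilateral hp0 hp1 hα1 hγ
  have hA : Summable (fun k : ℤ => (p ^ k * γ) ^ α * qExpe p (p ^ k * γ) * p ^ k) :=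
    summable_bilateral hp0 hp1 hα hγ
  refine ⟨hB, hA, ?_⟩
  have hrec : ∀ k : ℤ,
      (p ^ (k+1) * γ) ^ α * qExpe p (p ^ (k+1) * γ) * p ^ (k+1)
        = (p ^ (α+1)) * ((p ^ k * γ) ^ α * qExpe p (p ^ k * γ) * p ^ k)
          + (p ^ (α+1) * (1-p)) * ((p ^ k * γ) ^ (α+1) * qExpe p (p ^ k * γ) * p ^ k) := by
    intro k
    have hu : (0:ℝ) < p ^ k * γ := mul_pos (zpow_pos hp0 k) hγ
    have h1 : (p:ℝ) ^ (k+1) = p * p ^ k := by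
      rw [zpow_add_one₀ hp0.ne']; ring
    have h2 : (p:ℝ) ^ (k+1) * γ = p * (p ^ k * γ) := by rw [h1]; ring
    rw [h2, h1, Real.mul_rpow hp0.le hu.le, qExpe_shift hp0 hp1 hu.le,
      Real.rpow_add_one hu.ne' α, Real.rpow_add_one hp0.ne' α]
    ring
  have hshift :
      ∑' k : ℤ, (p ^ (k+1) * γ) ^ α * qExpe p (p ^ (k+1) * γ) * p ^ (k+1)
        = ∑' k : ℤ, (p ^ k * γ) ^ α * qExpe p (p ^ k * γ) * p ^ k := by
    simpa using (Equiv.addRight (1:ℤ)).tsum_eq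
      (fun k : ℤ => (p ^ k * γ) ^ α * qExpe p (p ^ k * γ) * p ^ k)
  have hsum : ∑' k : ℤ, (p ^ k * γ) ^ α * qExpe p (p ^ k * γ) * p ^ k
      = (p ^ (α+1)) * (∑' k : ℤ, (p ^ k * γ) ^ α * qExpe p (p ^ k * γ) * p ^ k)
        + (p ^ (α+1) * (1-p)) *
          (∑' k : ℤ, (p ^ k * γ) ^ (α+1) * qExpe p (p ^ k * γ) * p ^ k) := by
    calc ∑' k : ℤ, (p ^ k * γ) ^ α * qExpe p (p ^ k * γ) * p ^ k
        = ∑' k : ℤ, (p ^ (k+1) * γ) ^ α * qExpe p (p ^ (k+1) * γ) * p ^ (k+1) := hshift.symm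
    _ = ∑' k : ℤ, ((p ^ (α+1)) * ((p ^ k * γ) ^ α * qExpe p (p ^ k * γ) * p ^ k)
          + (p ^ (α+1) * (1-p)) *
            ((p ^ k * γ) ^ (α+1) * qExpe p (p ^ k * γ) * p ^ k)) := tsum_congr hrec
    _ = (p ^ (α+1)) * (∑' k : ℤ, (p ^ k * γ) ^ α * qExpe p (p ^ k * γ) * p ^ k)
        + (p ^ (α+1) * (1-p)) *
          (∑' k : ℤ, (p ^ k * γ) ^ (α+1) * qExpe p (p ^ k * γ) * p ^ k) := by
          rw [Summable.tsum_add (hA.mul_left _) (hB.mul_left _), tsum_mul_left, tsum_mul_left]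
  have hPq : q ^ (2*(α+1)) = p ^ (α+1) := by
    rw [Real.rpow_mul hq0.le, hpdef,
      show (2:ℝ) = ((2:ℕ):ℝ) by norm_num, Real.rpow_natCast]
  have hne : p - 1 ≠ 0 := by linarith
  rw [hPq, jacksonInf, jacksonInf, qNum]
  rw [div_mul_eq_mul_div, eq_div_iff hne]
  linear_combination (γ*(1-p)) * hsum
end
end
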